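/- For nonnegative integers k and l, ∏_{j=1}^k (q^{l+j}; q)_{j-1} = H̃_{q²}(l/2) H̃_{q²}((l+1)/2) H̃_{q²}((l−1)/2 + k) H̃_{q²}(l/2 + k) / H̃_q(l+k), where H̃_q is the q-hyperfactorial extended to half-integers by H̃_q(n) = ∏_{j=1}^{n+1/2}(q^{1/2};q)_{j-1}. -/
import Mathlib


open Finset

/-- q-Pochhammer symbol `(x;q)_n = ∏_{j=0}^{n-1} (1 - x q^j)`. -/
def qPoch {K : Type*} [Field K] (q x : K) (n : ℕ) : K :=
  ∏ j ∈ Finset.range n, (1 - x * q ^ j)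

/-- q-hyperfactorial `H̃_q(n) = ∏_{j=1}^n (q;q)_{j-1}` (integer argument). -/
def HtN {K : Type*} [Field K] (q : K) (n : ℕ) : K :=
  ∏ j ∈ Finset.range n, qPoch q q j

/-- `Htil s n2` is the q-hyperfactorial `H̃_{s²}(n2/2)` extended to half-integers:
for even `n2` it is `∏_{j=1}^{n2/2} (s²;s²)_{j-1}`, and for odd `n2` (half-odd-integer
argument) it is `∏_{j=1}^{(n2+1)/2} (s;s²)_{j-1}`, `s` playing the role of `(s²)^{1/2}`. -/
def Htil {K : Type*} [Field K] (s : K) (n2 : ℤ) : K :=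
  if n2 % 2 = 0 then ∏ j ∈ Finset.range (n2 / 2).toNat, qPoch (s ^ 2) (s ^ 2) j
  else ∏ j ∈ Finset.range ((n2 + 1) / 2).toNat, qPoch (s ^ 2) s j

section aux
variable {K : Type*} [Field K] (q : K)

lemma qPoch_succ (x : K) (n : ℕ) :
    qPoch q x (n+1) = qPoch q x n * (1 - x * q ^ n) := Finset.prod_range_succ _ _

lemma qPoch_pow_ne_zero (hq : ∀ n : ℕ, 0 < n → q ^ n ≠ 1) (a b n : ℕ) (ha : 0 < a) :
    qPoch (q ^ b) (q ^ a) n ≠ 0 := by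
  refine Finset.prod_ne_zero_iff.2 fun j _ => ?_
  have h : (q ^ a) * (q ^ b) ^ j = q ^ (a + b * j) := by
    rw [← pow_mul, ← pow_add]
  rw [h, sub_ne_zero]
  exact fun h2 => hq _ (by omega) h2.symm

lemma Htil_even (a : ℕ) : Htil q (2 * a : ℤ) = ∏ j ∈ Finset.range a, qPoch (q^2) (q^2) j := by
  have h1 : (2 * a : ℤ) % 2 = 0 := by omega
  have h2 : ((2 * a : ℤ) / 2).toNat = a := by omega
  rw [Htil, if_pos h1, h2]

lemma Htil_odd (a : ℕ) : Htil q (2 * a + 1 : ℤ) = ∏ j ∈ Finset.range (a+1), qPoch (q^2) q j := by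
  have h1 : ¬ ((2 * (a:ℤ) + 1) % 2 = 0) := by omega
  have h2 : (((2 * a + 1 : ℤ) + 1) / 2).toNat = a + 1 := by omega
  rw [Htil, if_neg h1, h2]

lemma Htil_odd' (a : ℕ) : Htil q (2 * a - 1 : ℤ) = ∏ j ∈ Finset.range a, qPoch (q^2) q j := by
  have h1 : ¬ ((2 * (a:ℤ) - 1) % 2 = 0) := by omega
  have h2 : (((2 * a - 1 : ℤ) + 1) / 2).toNat = a := by omega
  rw [Htil, if_neg h1, h2]

lemma qPoch_two_mul (n : ℕ) :
    qPoch q q (2*n) = qPoch (q^2) (q^2) n * qPoch (q^2) q n := by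
  induction n with
  | zero => simp [qPoch]
  | succ n ih =>
    have : 2 * (n+1) = (2*n) + 1 + 1 := by ring
    rw [this, qPoch_succ, qPoch_succ, ih, qPoch_succ, qPoch_succ]
    ring

lemma qPoch_two_mul_add_one (n : ℕ) :
    qPoch q q (2*n+1) = qPoch (q^2) (q^2) n * qPoch (q^2) q (n+1) := by
  rw [qPoch_succ, qPoch_two_mul, qPoch_succ]
  ring

lemma Htil_step (m : ℕ) :
    Htil q ((m:ℤ)+1) * Htil q ((m:ℤ)+2) =
      Htil q ((m:ℤ)-1) * Htil q (m:ℤ) * qPoch q q m := by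
  rcases Nat.even_or_odd m with ⟨a, ha⟩ | ⟨a, ha⟩
  · subst ha
    have e1 : ((a + a : ℕ) : ℤ) + 1 = 2 * a + 1 := by push_cast; ring
    have e2 : ((a + a : ℕ) : ℤ) + 2 = 2 * (a+1 : ℕ) := by push_cast; ring
    have e3 : ((a + a : ℕ) : ℤ) - 1 = 2 * a - 1 := by push_cast; ring
    have e4 : ((a + a : ℕ) : ℤ) = 2 * a := by push_cast; ring
    have e5 : a + a = 2 * a := by ring
    rw [e1, e2, e3, e4, e5, Htil_odd, Htil_even, Htil_odd', Htil_even,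
      qPoch_two_mul, Finset.prod_range_succ, Finset.prod_range_succ]
    ring
  · subst ha
    have e1 : ((2 * a + 1 : ℕ) : ℤ) + 1 = 2 * (a+1 : ℕ) := by push_cast; ring
    have e2 : ((2 * a + 1 : ℕ) : ℤ) + 2 = 2 * (a+1 : ℕ) + 1 := by push_cast; ring
    have e3 : ((2 * a + 1 : ℕ) : ℤ) - 1 = 2 * a := by push_cast; ring
    have e4 : ((2 * a + 1 : ℕ) : ℤ) = 2 * a + 1 := by push_cast; ring
    rw [e1, e2, e3, e4, Htil_odd, Htil_even, Htil_odd, Htil_even,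
      qPoch_two_mul_add_one, Finset.prod_range_succ, Finset.prod_range_succ]
    ring

lemma HtN_base (l : ℕ) :
    HtN q l = Htil q (l:ℤ) * Htil q (l:ℤ) * Htil q ((l:ℤ)-1) * Htil q ((l:ℤ)+1) := by
  induction l with
  | zero =>
    have h0 : Htil q (0:ℤ) = 1 := by
      have := Htil_even q 0; simpa using this
    have hm : Htil q (-1:ℤ) = 1 := by
      have := Htil_odd' q 0; simpa using this
    have h1 : Htil q (1:ℤ) = 1 := by
      have := Htil_odd q 0; simp [qPoch] at this; simpa using this
    simp [HtN, h0, hm, h1]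
  | succ l ih =>
    have hstep := Htil_step q l
    have hN : HtN q (l+1) = HtN q l * qPoch q q l := Finset.prod_range_succ _ _
    have e1 : ((l+1 : ℕ) : ℤ) = (l:ℤ)+1 := by push_cast; ring
    have e2 : ((l+1 : ℕ) : ℤ) - 1 = (l:ℤ) := by push_cast; ring
    have e3 : ((l+1 : ℕ) : ℤ) + 1 = (l:ℤ)+2 := by push_cast; ring
    rw [hN, ih, e1, show (l:ℤ)+1-1 = (l:ℤ) from by ring,
      show (l:ℤ)+1+1 = (l:ℤ)+2 from by ring]
    linear_combination (-(Htil q ((l:ℤ)+1) * Htil q (l:ℤ))) * hstep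

lemma qPoch_add (m k : ℕ) :
    qPoch q q (m + k) = qPoch q q m * qPoch q (q ^ (m+1)) k := by
  induction k with
  | zero => simp [qPoch]
  | succ k ih =>
    have : m + (k+1) = (m+k) + 1 := by ring
    rw [this, qPoch_succ, ih, qPoch_succ]
    rw [show q ^ (m+1) * q ^ k = q * q ^ (m+k) by rw [← pow_add, ← pow_succ']; ring_nf]
    ring

lemma Htil_ne_zero (hq : ∀ n : ℕ, 0 < n → q ^ n ≠ 1) (n : ℤ) : Htil q n ≠ 0 := by
  rw [Htil]
  split
  · refine Finset.prod_ne_zero_iff.2 fun j _ => ?_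
    have := qPoch_pow_ne_zero q hq 2 2 j (by omega)
    simpa using this
  · refine Finset.prod_ne_zero_iff.2 fun j _ => ?_
    have := qPoch_pow_ne_zero q hq 1 2 j (by omega)
    simpa using this

lemma HtN_ne_zero (hq : ∀ n : ℕ, 0 < n → q ^ n ≠ 1) (n : ℕ) : HtN q n ≠ 0 := by
  refine Finset.prod_ne_zero_iff.2 fun j _ => ?_
  have := qPoch_pow_ne_zero q hq 1 1 j (by omega)
  simpa using this

end aux


/-- `∏_{j=1}^k (q^{l+j};q)_{j-1}
  = H̃_{q²}(l/2) H̃_{q²}((l+1)/2) H̃_{q²}((l−1)/2+k) H̃_{q²}(l/2+k) / H̃_q(l+k)`,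
the square root of `q²` being `q` (arguments of `Htil` are doubled). -/
theorem htilde_triangular_prod {K : Type*} [Field K] (q : K)
    (hq : ∀ n : ℕ, 0 < n → q ^ n ≠ 1) (k l : ℕ) :
    ∏ j ∈ Finset.range k, qPoch q (q ^ (l + 1 + j)) j =
      Htil q (l : ℤ) * Htil q ((l : ℤ) + 1) * Htil q ((l : ℤ) - 1 + 2 * k) *
          Htil q ((l : ℤ) + 2 * k) / HtN q (l + k) := by
  induction k with
  | zero =>
    have hN := HtN_base q l
    have hne := HtN_ne_zero q hq l
    simp only [Finset.range_zero, Finset.prod_empty, Nat.cast_zero, mul_zero, add_zero,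
      Nat.add_zero]
    rw [eq_div_iff hne, hN]
    ring
  | succ k ih =>
    rw [Finset.prod_range_succ, ih]
    have hNne : HtN q (l + k) ≠ 0 := HtN_ne_zero q hq _
    have hNne' : HtN q (l + (k+1)) ≠ 0 := HtN_ne_zero q hq _
    have hN : HtN q (l + (k+1)) = HtN q (l+k) * qPoch q q (l+k) := by
      rw [show l + (k+1) = (l+k)+1 by ring]
      exact Finset.prod_range_succ _ _
    have hstep := Htil_step q (l + 2*k)
    have e1 : ((l + 2*k : ℕ) : ℤ) + 1 = (l:ℤ) - 1 + 2 * (k+1 : ℕ) := by push_cast; ring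
    have e2 : ((l + 2*k : ℕ) : ℤ) + 2 = (l:ℤ) + 2 * (k+1 : ℕ) := by push_cast; ring
    have e3 : ((l + 2*k : ℕ) : ℤ) - 1 = (l:ℤ) - 1 + 2 * (k : ℕ) := by push_cast; ring
    have e4 : ((l + 2*k : ℕ) : ℤ) = (l:ℤ) + 2 * (k : ℕ) := by push_cast; ring
    rw [e1, e2, e3, e4] at hstep
    have hadd : qPoch q q (l + 2*k) = qPoch q q (l+k) * qPoch q (q ^ (l+1+k)) k := by
      have := qPoch_add q (l+k) k
      rw [show (l+k)+k = l + 2*k by ring, show (l+k)+1 = l+1+k by ring] at this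
      exact this
    rw [div_mul_eq_mul_div, div_eq_div_iff hNne hNne', hN]
    rw [hadd] at hstep
    linear_combination (-(Htil q (l:ℤ) * Htil q ((l:ℤ)+1) * HtN q (l+k))) * hstep
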